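/- arXiv:2106.14129 — 5 statements merged into one kernel-verified Lean document; each statement's English description precedes it below -/
import Mathlib

section
/- Under the stated hypotheses on j, M, κ, λ, the family U_j := {A : A is a ZFSet-subset of 𝒫_κ(λ) and j''λ ∈ j(A)} is a fine normal ultrafilter on I := 𝒫_κ(λ). (Single-universe form of Claim 2.2.1: the ultrafilter derived from a λ-supercompactness embedding is fine and normal.) -/
/-!
Every property of `U_j` is obtained by transferring a first-order fact through `j`. The formulas
used are in effect bounded (Δ₀), so their meaning in any transitive `∈`-structure, be it `ZFSet`
itself or the class `M`, is the true one. Hence `j` commutes with `∅`, `∩`, `\` and the separations defining the fine and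
the diagonal sets, and preserves Kuratowski pairs, totality, injectivity and single-valuedness;
the ultrafilter axioms then follow from `j''λ ∈ j(𝒫_κ(λ))`.

For fineness, an injection of `x ∈ 𝒫_κ(λ)` into some `e ∈ κ` becomes an injection of `j x` into
`j e = e`, all of whose elements `j` fixes; pulling back along it gives `j x = j''x ⊆ j''λ`.
For normality, code `⟨A_ξ⟩` by its graph `F`: every element of `j''λ` is some `j ξ`, and `j F`
sends it to `j(A_ξ)`, which contains `j''λ`.
-/

open FirstOrder

/-- The language `L_ε` with a single binary relation symbol (Mathlib's graph language,
whose unique binary relation we interpret as membership). -/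
abbrev Lε : FirstOrder.Language := FirstOrder.Language.graph

def memStruc (S : Type*) (r : S → S → Prop) : Lε.Structure S where
  RelMap | .adj => fun x => r (x 0) (x 1)

def RealizeIn (S : Type*) (r : S → S → Prop) {n : ℕ}
    (φ : Lε.Formula (Fin n)) (v : Fin n → S) : Prop :=
  @FirstOrder.Language.Formula.Realize Lε S (memStruc S r) _ φ v

def IsOrd (x : ZFSet) : Prop := x.IsTransitive ∧ ∀ y ∈ x, ZFSet.IsTransitive y

def IsInjFn (x y f : ZFSet) : Prop :=
  ZFSet.IsFunc x y f ∧
    ∀ a ∈ x, ∀ b ∈ x, ∀ c : ZFSet, ZFSet.pair a c ∈ f → ZFSet.pair b c ∈ f → a = b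

def IsBijFn (x y f : ZFSet) : Prop :=
  IsInjFn x y f ∧ ∀ c ∈ y, ∃ a ∈ x, ZFSet.pair a c ∈ f

def IsCard (x : ZFSet) : Prop := IsOrd x ∧ ∀ y ∈ x, ¬ ∃ f : ZFSet, IsBijFn x y f

/-- `𝒫_κ(λ)` -/
def Pk (κ lam : ZFSet) : ZFSet :=
  ZFSet.sep (fun x => ∃ e ∈ κ, ∃ f : ZFSet, IsInjFn x e f) (ZFSet.powerset lam)

def IsZUltrafilterOn (I : ZFSet) (U : Set ZFSet) : Prop :=
  (∅ : ZFSet) ∉ U ∧ (∀ A ∈ U, A ⊆ I) ∧ (∀ A ∈ U, ∀ B ∈ U, A ∩ B ∈ U) ∧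
    (∀ A ∈ U, ∀ B : ZFSet, A ⊆ B → B ⊆ I → B ∈ U) ∧
    (∀ A : ZFSet, A ⊆ I → (A ∈ U ∨ I \ A ∈ U))

def IsZFineOn (I : ZFSet) (U : Set ZFSet) : Prop :=
  ∀ x₀ ∈ I, ZFSet.sep (fun x => x₀ ⊆ x) I ∈ U

def IsZNormalOn (lam I : ZFSet) (U : Set ZFSet) : Prop :=
  ∀ A : ZFSet → ZFSet, (∀ ξ ∈ lam, A ξ ∈ U) →
    ZFSet.sep (fun x => ∀ ξ ∈ x, x ∈ A ξ) I ∈ U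

open FirstOrder.Language

universe u

def IsTransitiveEmbedding {S : Type*} (e : S → ZFSet.{u}) : Prop :=
  Function.Injective e ∧ ∀ a, ∀ y ∈ e a, ∃ x, e x = y

namespace IsTransitiveEmbedding

variable {S : Type*} {e : S → ZFSet.{u}} (he : IsTransitiveEmbedding e)
include he

lemma ext_iff {a : S} {B : ZFSet} (hB : ∀ y ∈ B, ∃ x, e x = y) :
    e a = B ↔ ∀ x, e x ∈ e a ↔ e x ∈ B := by
  refine ⟨fun h x => by rw [h], fun h => ZFSet.ext fun y => ⟨fun hy => ?_, fun hy => ?_⟩⟩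
  · obtain ⟨x, rfl⟩ := he.2 a y hy
    exact (h x).1 hy
  · obtain ⟨x, rfl⟩ := hB y hy
    exact (h x).2 hy

lemma eq_sep_iff {a b : S} {p : ZFSet → Prop} :
    e a = ZFSet.sep p (e b) ↔ ∀ x, e x ∈ e a ↔ e x ∈ e b ∧ p (e x) := by
  rw [he.ext_iff fun y hy => he.2 b y (ZFSet.mem_sep.1 hy).1]
  simp only [ZFSet.mem_sep]

lemma eq_pair_iff {a b p : S} :
    e p = ZFSet.pair (e a) (e b) ↔
      ∃ s, e s ∈ e p ∧ ∃ t, e t ∈ e p ∧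
        (∀ x, e x ∈ e s ↔ x = a) ∧ (∀ x, e x ∈ e t ↔ x = a ∨ x = b) ∧
          ∀ q, e q ∈ e p → q = s ∨ q = t := by
  have hrange : ∀ y ∈ ({e a, e b} : ZFSet), ∃ x, e x = y := by
    simp only [ZFSet.mem_pair]
    rintro y (rfl | rfl) <;> exact ⟨_, rfl⟩
  constructor
  · intro hp
    obtain ⟨s, hs⟩ := he.2 p {e a} (by simp [hp, ZFSet.pair])
    obtain ⟨t, ht⟩ := he.2 p {e a, e b} (by simp [hp, ZFSet.pair])
    refine ⟨s, by simp [hs, hp, ZFSet.pair], t, by simp [ht, hp, ZFSet.pair],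
      fun x => by simp [hs, he.1.eq_iff], fun x => by simp [ht, he.1.eq_iff], fun q hq => ?_⟩
    simpa [hp, ZFSet.pair, ← hs, ← ht, he.1.eq_iff] using hq
  · rintro ⟨s, hs, t, ht, hs', ht', hp'⟩
    have hs1 : e s = {e a} := (he.ext_iff fun y hy => hrange y (by simp_all)).2 fun x => by
      simp [hs' x, he.1.eq_iff]
    have ht1 : e t = {e a, e b} := (he.ext_iff hrange).2 fun x => by
      simp [ht' x, he.1.eq_iff]
    refine (he.ext_iff fun y hy => ?_).2 fun x => ?_
    · simp only [ZFSet.pair, ZFSet.mem_pair] at hy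
      rcases hy with rfl | rfl
      exacts [⟨s, hs1⟩, ⟨t, ht1⟩]
    · simp only [ZFSet.pair, ZFSet.mem_pair, ← hs1, ← ht1, he.1.eq_iff]
      exact ⟨hp' x, by rintro (rfl | rfl) <;> assumption⟩

lemma pair_mem_iff {a b c : S} :
    ZFSet.pair (e a) (e b) ∈ e c ↔ ∃ p, e p ∈ e c ∧ e p = ZFSet.pair (e a) (e b) := by
  refine ⟨fun h => ?_, fun ⟨p, hp, h⟩ => h ▸ hp⟩
  obtain ⟨p, hp⟩ := he.2 c _ h
  exact ⟨p, hp ▸ h, hp⟩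

lemma forall_mem_iff {a : S} {P : ZFSet → Prop} :
    (∀ y ∈ e a, P y) ↔ ∀ x, e x ∈ e a → P (e x) := by
  refine ⟨fun h x hx => h _ hx, fun h y hy => ?_⟩
  obtain ⟨x, rfl⟩ := he.2 a y hy
  exact h x hy

lemma exists_mem_iff {a : S} {P : ZFSet → Prop} :
    (∃ y ∈ e a, P y) ↔ ∃ x, e x ∈ e a ∧ P (e x) := by
  refine ⟨fun ⟨y, hy, h⟩ => ?_, fun ⟨x, hx, h⟩ => ⟨_, hx, h⟩⟩
  obtain ⟨x, rfl⟩ := he.2 a y hy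
  exact ⟨x, hy, h⟩

lemma exists_of_pair_mem {a b : ZFSet} {c : S} (h : ZFSet.pair a b ∈ e c) :
    (∃ x, e x = a) ∧ ∃ y, e y = b := by
  obtain ⟨p, hp⟩ := he.2 c _ h
  obtain ⟨t, ht⟩ := he.2 p {a, b} (by simp [hp, ZFSet.pair])
  exact ⟨he.2 t a (by simp [ht]), he.2 t b (by simp [ht])⟩

lemma forall_pair_mem_iff {a : ZFSet} {c : S} {P : ZFSet → Prop} :
    (∀ y, ZFSet.pair a y ∈ e c → P y) ↔ ∀ x, ZFSet.pair a (e x) ∈ e c → P (e x) := by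
  refine ⟨fun h x => h (e x), fun h y hy => ?_⟩
  obtain ⟨x, rfl⟩ := (he.exists_of_pair_mem hy).2
  exact h x hy

lemma forall_pair_mem_iff₂ {c : S} {P : ZFSet → ZFSet → Prop} :
    (∀ a b, ZFSet.pair a b ∈ e c → P a b) ↔
      ∀ x y, ZFSet.pair (e x) (e y) ∈ e c → P (e x) (e y) := by
  refine ⟨fun h x y => h (e x) (e y), fun h a b hab => ?_⟩
  obtain ⟨⟨x, rfl⟩, y, rfl⟩ := he.exists_of_pair_mem hab
  exact h x y hab

lemma exists_pair_mem_iff {b : ZFSet} {c : S} :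
    (∃ a, ZFSet.pair a b ∈ e c) ↔ ∃ x, ZFSet.pair (e x) b ∈ e c := by
  refine ⟨fun ⟨a, h⟩ => ?_, fun ⟨x, h⟩ => ⟨e x, h⟩⟩
  obtain ⟨⟨x, rfl⟩, -⟩ := he.exists_of_pair_mem h
  exact ⟨x, h⟩

end IsTransitiveEmbedding

lemma isTransitiveEmbedding_id : IsTransitiveEmbedding (id : ZFSet.{u} → ZFSet.{u}) :=
  ⟨Function.injective_id, fun _ y _ => ⟨y, rfl⟩⟩

def IsTransitiveClass (M : ZFSet.{u} → Prop) : Prop :=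
  ∀ x y : ZFSet, M x → y ∈ x → M y

lemma IsTransitiveClass.isTransitiveEmbedding_val {M : ZFSet.{u} → Prop}
    (hM : IsTransitiveClass M) : IsTransitiveEmbedding (Subtype.val : {x // M x} → ZFSet) :=
  ⟨Subtype.val_injective, fun a y hy => ⟨⟨y, hM _ _ a.2 hy⟩, rfl⟩⟩

def AbsolutelyDefines {n : ℕ} (φ : Lε.Formula (Fin n)) (P : (Fin n → ZFSet.{u}) → Prop) :
    Prop :=
  ∀ (S : Type (u + 1)) (e : S → ZFSet.{u}), IsTransitiveEmbedding e →
    ∀ v, RealizeIn S (fun a b => e a ∈ e b) φ v ↔ P (e ∘ v)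

def memF {α : Type*} {n : ℕ} (t₁ t₂ : Lε.Term (α ⊕ Fin n)) : Lε.BoundedFormula α n :=
  Language.adj.boundedFormula₂ t₁ t₂

def fvar {α : Type*} {n : ℕ} (a : α) : Lε.Term (α ⊕ Fin n) := Term.var (Sum.inl a)

section Semantics

variable {S : Type (u + 1)} {e : S → ZFSet.{u}}

local notation "memIn" e => memStruc _ (fun a b => e a ∈ e b)

@[simp] lemma realize_memF {α : Type*} {n : ℕ}
    (t₁ t₂ : Lε.Term (α ⊕ Fin n)) (v : α → S) (xs : Fin n → S) :
    @BoundedFormula.Realize Lε S (memIn e) _ _ (memF t₁ t₂) v xs ↔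
      e (@Term.realize Lε S (memIn e) _ (Sum.elim v xs) t₁) ∈
        e (@Term.realize Lε S (memIn e) _ (Sum.elim v xs) t₂) := by
  let _ := memIn e
  simp only [memF, BoundedFormula.realize_rel₂]
  rfl

-- Bound variables are de Bruijn levels: `&0` is bound by the outermost quantifier.
def pairMemF : Lε.Formula (Fin 3) :=
  ∃' (memF &0 (fvar 2) ⊓ ∃' (memF &1 &0 ⊓ ∃' (memF &2 &0 ⊓
    (∀' (memF &3 &1 ⇔ &3 =' fvar 0) ⊓ (∀' (memF &3 &2 ⇔ (&3 =' fvar 0 ⊔ &3 =' fvar 1)) ⊓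
      ∀' (memF &3 &0 ⟹ (&3 =' &1 ⊔ &3 =' &2)))))))

lemma pairMemF_defines :
    AbsolutelyDefines pairMemF fun v => ZFSet.pair (v 0) (v 1) ∈ v 2 := by
  intro S e he v
  let _ := memIn e
  simp [RealizeIn, pairMemF, Formula.Realize, fvar, Fin.snoc, he.pair_mem_iff, he.eq_pair_iff]

def pairMemAt {α : Type*} {n : ℕ} (a b c : α ⊕ Fin n) : Lε.BoundedFormula α n :=
  BoundedFormula.relabel ![a, b, c] pairMemF

lemma realize_pairMemAt (he : IsTransitiveEmbedding e) {α : Type*} {n : ℕ}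
    (a b c : α ⊕ Fin n) (v : α → S) (xs : Fin n → S) :
    @BoundedFormula.Realize Lε S (memIn e) _ _ (pairMemAt a b c) v xs ↔
      ZFSet.pair (e (Sum.elim v xs a)) (e (Sum.elim v xs b)) ∈ e (Sum.elim v xs c) := by
  let _ := memIn e
  have hxs (w : Fin 3 → S) (xs' : Fin 0 → S) :
      BoundedFormula.Realize pairMemF w xs' ↔ RealizeIn S (fun a b => e a ∈ e b) pairMemF w := by
    rw [Subsingleton.elim xs' default]; rfl
  rw [pairMemAt, BoundedFormula.realize_relabel, hxs, pairMemF_defines _ e he]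
  rfl

def emptyF : Lε.Formula (Fin 1) :=
  ∀' ∼(memF &0 (fvar 0))

lemma emptyF_defines : AbsolutelyDefines emptyF fun v => v 0 = ∅ := by
  intro S e he v
  let _ := memIn e
  simp [RealizeIn, emptyF, Formula.Realize, fvar, Fin.snoc, he.ext_iff (B := ∅) (by simp)]

def interF : Lε.Formula (Fin 3) :=
  ∀' (memF &0 (fvar 0) ⇔ (memF &0 (fvar 1) ⊓ memF &0 (fvar 2)))

lemma interF_defines : AbsolutelyDefines interF fun v => v 0 = v 1 ∩ v 2 := by
  intro S e he v
  let _ := memIn e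
  simp [RealizeIn, interF, Formula.Realize, fvar, Fin.snoc,
    he.ext_iff fun y hy => he.2 _ y (ZFSet.mem_inter.1 hy).1]

def sdiffF : Lε.Formula (Fin 3) :=
  ∀' (memF &0 (fvar 0) ⇔ (memF &0 (fvar 1) ⊓ ∼(memF &0 (fvar 2))))

lemma sdiffF_defines : AbsolutelyDefines sdiffF fun v => v 0 = v 1 \ v 2 := by
  intro S e he v
  let _ := memIn e
  simp [RealizeIn, sdiffF, Formula.Realize, fvar, Fin.snoc,
    he.ext_iff fun y hy => he.2 _ y (ZFSet.mem_sdiff.1 hy).1]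

def supersetSepF : Lε.Formula (Fin 3) :=
  ∀' (memF &0 (fvar 0) ⇔ (memF &0 (fvar 1) ⊓ ∀' (memF &1 (fvar 2) ⟹ memF &1 &0)))

lemma supersetSepF_defines :
    AbsolutelyDefines supersetSepF fun v => v 0 = ZFSet.sep (v 2 ⊆ ·) (v 1) := by
  intro S e he v
  let _ := memIn e
  simp [RealizeIn, supersetSepF, Formula.Realize, fvar, Fin.snoc, he.eq_sep_iff,
    ZFSet.subset_def, he.forall_mem_iff]

def diagSepF : Lε.Formula (Fin 3) :=
  ∀' (memF &0 (fvar 0) ⇔ (memF &0 (fvar 1) ⊓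
    ∀' (memF &1 &0 ⟹ ∀' (pairMemAt (Sum.inr 1) (Sum.inr 2) (Sum.inl 2) ⟹ memF &0 &2))))

lemma diagSepF_defines : AbsolutelyDefines diagSepF fun v =>
    v 0 = ZFSet.sep (fun x => ∀ ξ ∈ x, ∀ y, ZFSet.pair ξ y ∈ v 2 → x ∈ y) (v 1) := by
  intro S e he v
  let _ := memIn e
  simp [RealizeIn, diagSepF, Formula.Realize, fvar, Fin.snoc, realize_pairMemAt he,
    he.eq_sep_iff, he.forall_mem_iff, he.forall_pair_mem_iff]

def totalF : Lε.Formula (Fin 3) :=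
  ∀' (memF &0 (fvar 0) ⟹ ∃' (memF &1 (fvar 1) ⊓ pairMemAt (Sum.inr 0) (Sum.inr 1) (Sum.inl 2)))

lemma totalF_defines :
    AbsolutelyDefines totalF fun v => ∀ z ∈ v 0, ∃ w ∈ v 1, ZFSet.pair z w ∈ v 2 := by
  intro S e he v
  let _ := memIn e
  simp [RealizeIn, totalF, Formula.Realize, fvar, Fin.snoc, realize_pairMemAt he,
    he.forall_mem_iff, he.exists_mem_iff]

def injF : Lε.Formula (Fin 1) :=
  ∀' ∀' (pairMemAt (Sum.inr 0) (Sum.inr 1) (Sum.inl 0) ⟹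
    ∀' ∀' (pairMemAt (Sum.inr 2) (Sum.inr 3) (Sum.inl 0) ⟹ &1 =' &3 ⟹ &0 =' &2))

lemma injF_defines : AbsolutelyDefines injF fun v =>
    ∀ a b, ZFSet.pair a b ∈ v 0 → ∀ c d, ZFSet.pair c d ∈ v 0 → b = d → a = c := by
  intro S e he v
  let _ := memIn e
  simp [RealizeIn, injF, Formula.Realize, Fin.snoc, realize_pairMemAt he,
    he.forall_pair_mem_iff₂, he.1.eq_iff]

def functionalF : Lε.Formula (Fin 1) :=
  ∀' ∀' (pairMemAt (Sum.inr 0) (Sum.inr 1) (Sum.inl 0) ⟹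
    ∀' ∀' (pairMemAt (Sum.inr 2) (Sum.inr 3) (Sum.inl 0) ⟹ &0 =' &2 ⟹ &1 =' &3))

lemma functionalF_defines : AbsolutelyDefines functionalF fun v =>
    ∀ a b, ZFSet.pair a b ∈ v 0 → ∀ c d, ZFSet.pair c d ∈ v 0 → a = c → b = d := by
  intro S e he v
  let _ := memIn e
  simp [RealizeIn, functionalF, Formula.Realize, Fin.snoc, realize_pairMemAt he,
    he.forall_pair_mem_iff₂, he.1.eq_iff]

def hasPreimageF : Lε.Formula (Fin 2) :=
  ∃' pairMemAt (Sum.inr 0) (Sum.inl 0) (Sum.inl 1)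

lemma hasPreimageF_defines :
    AbsolutelyDefines hasPreimageF fun v => ∃ a, ZFSet.pair a (v 0) ∈ v 1 := by
  intro S e he v
  let _ := memIn e
  simp [RealizeIn, hasPreimageF, Formula.Realize, Fin.snoc, realize_pairMemAt he,
    he.exists_pair_mem_iff]

end Semantics

def IsElementaryEmbedding (M : ZFSet.{u} → Prop) (j : ZFSet.{u} → {x // M x}) : Prop :=
  ∀ (n : ℕ) (φ : Lε.Formula (Fin n)) (v : Fin n → ZFSet),
    RealizeIn ZFSet (· ∈ ·) φ v ↔
      RealizeIn {x : ZFSet // M x} (fun a b => a.1 ∈ b.1) φ (fun i => j (v i))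

def derivedUltrafilter {M : ZFSet.{u} → Prop} (j : ZFSet.{u} → {x // M x}) (I a : ZFSet) :
    Set ZFSet :=
  {A | A ⊆ I ∧ a ∈ (j A).1}

section Transfer

variable {M : ZFSet.{u} → Prop} {j : ZFSet.{u} → {x // M x}}
  (hM : IsTransitiveClass M) (hj : IsElementaryEmbedding M j)
include hM hj

lemma AbsolutelyDefines.map_iff {n : ℕ} {φ : Lε.Formula (Fin n)} {P : (Fin n → ZFSet) → Prop}
    (hφ : AbsolutelyDefines φ P) (v : Fin n → ZFSet) : P v ↔ P fun i => (j (v i)).1 :=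
  (hφ _ id isTransitiveEmbedding_id v).symm.trans
    ((hj n φ v).trans (hφ _ Subtype.val hM.isTransitiveEmbedding_val _))

namespace IsElementaryEmbedding

lemma map_empty : (j ∅).1 = ∅ :=
  (emptyF_defines.map_iff hM hj ![∅]).1 rfl

lemma map_inter (A B : ZFSet) : (j (A ∩ B)).1 = (j A).1 ∩ (j B).1 :=
  (interF_defines.map_iff hM hj ![A ∩ B, A, B]).1 rfl

lemma map_sdiff (A B : ZFSet) : (j (A \ B)).1 = (j A).1 \ (j B).1 :=
  (sdiffF_defines.map_iff hM hj ![A \ B, A, B]).1 rfl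

lemma map_mono {A B : ZFSet} (h : A ⊆ B) : (j A).1 ⊆ (j B).1 := by
  have hA := hj.map_inter hM A B
  rw [ZFSet.inter_eq_left_of_subset h] at hA
  exact fun x hx => (ZFSet.mem_inter.1 (hA ▸ hx)).2

lemma map_sep_superset (x₀ I : ZFSet) :
    (j (ZFSet.sep (x₀ ⊆ ·) I)).1 = ZFSet.sep ((j x₀).1 ⊆ ·) (j I).1 :=
  (supersetSepF_defines.map_iff hM hj ![_, I, x₀]).1 rfl

lemma map_diag_sep (F I : ZFSet) :
    (j (ZFSet.sep (fun x => ∀ ξ ∈ x, ∀ y, ZFSet.pair ξ y ∈ F → x ∈ y) I)).1 =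
      ZFSet.sep (fun x => ∀ ξ ∈ x, ∀ y, ZFSet.pair ξ y ∈ (j F).1 → x ∈ y) (j I).1 :=
  (diagSepF_defines.map_iff hM hj ![_, I, F]).1 rfl

lemma pair_mem_map {a b c : ZFSet} (h : ZFSet.pair a b ∈ c) :
    ZFSet.pair (j a).1 (j b).1 ∈ (j c).1 :=
  (pairMemF_defines.map_iff hM hj ![a, b, c]).1 h

lemma map_total {x y f : ZFSet} (h : ∀ z ∈ x, ∃ w ∈ y, ZFSet.pair z w ∈ f) :
    ∀ z ∈ (j x).1, ∃ w ∈ (j y).1, ZFSet.pair z w ∈ (j f).1 :=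
  (totalF_defines.map_iff hM hj ![x, y, f]).1 h

lemma map_inj {f : ZFSet}
    (h : ∀ a b, ZFSet.pair a b ∈ f → ∀ c d, ZFSet.pair c d ∈ f → b = d → a = c) :
    ∀ a b, ZFSet.pair a b ∈ (j f).1 → ∀ c d, ZFSet.pair c d ∈ (j f).1 → b = d → a = c :=
  (injF_defines.map_iff hM hj ![f]).1 h

lemma map_functional {f : ZFSet}
    (h : ∀ a b, ZFSet.pair a b ∈ f → ∀ c d, ZFSet.pair c d ∈ f → a = c → b = d) :
    ∀ a b, ZFSet.pair a b ∈ (j f).1 → ∀ c d, ZFSet.pair c d ∈ (j f).1 → a = c → b = d :=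
  (functionalF_defines.map_iff hM hj ![f]).1 h

lemma exists_pair_mem_of_map {b c : ZFSet} (h : ∃ a, ZFSet.pair a (j b).1 ∈ (j c).1) :
    ∃ a, ZFSet.pair a b ∈ c :=
  (hasPreimageF_defines.map_iff hM hj ![b, c]).2 h

lemma exists_eq_map_of_injFn {x y f : ZFSet} (hf : IsInjFn x y f)
    (hfix : ∀ w ∈ (j y).1, (j w).1 = w) {ζ : ZFSet} (hζ : ζ ∈ (j x).1) :
    ∃ η ∈ x, (j η).1 = ζ := by
  obtain ⟨hfunc, hinj⟩ := hf
  have hdom {a b : ZFSet} (h : ZFSet.pair a b ∈ f) : a ∈ x ∧ b ∈ y :=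
    ZFSet.pair_mem_prod.1 (hfunc.1 h)
  obtain ⟨w, hw, hζw⟩ := hj.map_total hM
    (fun z hz => (hfunc.2 z hz).exists.imp fun w h => ⟨(hdom h).2, h⟩) ζ hζ
  rw [← hfix w hw] at hζw
  obtain ⟨η, hηw⟩ := hj.exists_pair_mem_of_map hM ⟨ζ, hζw⟩
  exact ⟨η, (hdom hηw).1, hj.map_inj hM
    (fun a b hab c d hcd hbd => hinj a (hdom hab).1 c (hdom hcd).1 b hab (hbd ▸ hcd))
    _ _ (hj.pair_mem_map hM hηw) _ _ hζw rfl⟩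

lemma exists_eq_map_of_mem_Pk {κ lam x : ZFSet} (hκ : κ.IsTransitive)
    (hcrit : ∀ ξ ∈ κ, (j ξ).1 = ξ) (hx : x ∈ Pk κ lam) {ζ : ZFSet} (hζ : ζ ∈ (j x).1) :
    ∃ η ∈ x, (j η).1 = ζ := by
  obtain ⟨e, he, f, hf⟩ := (ZFSet.mem_sep.1 hx).2
  refine hj.exists_eq_map_of_injFn hM hf (fun w hw => hcrit w (hκ e he ?_)) hζ
  rwa [hcrit e he] at hw

end IsElementaryEmbedding

variable {I a : ZFSet}

lemma isZUltrafilterOn_derivedUltrafilter (ha : a ∈ (j I).1) :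
    IsZUltrafilterOn I (derivedUltrafilter j I a) := by
  refine ⟨fun h => ?_, fun A hA => hA.1, fun A hA B hB => ?_,
    fun A hA B hAB hBI => ⟨hBI, hj.map_mono hM hAB hA.2⟩, fun A hAI => ?_⟩
  · have h₀ := h.2
    rw [hj.map_empty hM] at h₀
    exact ZFSet.notMem_empty _ h₀
  · refine ⟨fun x hx => hA.1 (ZFSet.mem_inter.1 hx).1, ?_⟩
    rw [hj.map_inter hM]
    exact ZFSet.mem_inter.2 ⟨hA.2, hB.2⟩
  · by_cases h : a ∈ (j A).1
    · exact Or.inl ⟨hAI, h⟩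
    · refine Or.inr ⟨fun x hx => (ZFSet.mem_sdiff.1 hx).1, ?_⟩
      rw [hj.map_sdiff hM]
      exact ZFSet.mem_sdiff.2 ⟨ha, h⟩

lemma isZFineOn_derivedUltrafilter (ha : a ∈ (j I).1) (hsub : ∀ x ∈ I, (j x).1 ⊆ a) :
    IsZFineOn I (derivedUltrafilter j I a) := fun x hx => by
  refine ⟨ZFSet.sep_subset, ?_⟩
  rw [hj.map_sep_superset hM, ZFSet.mem_sep]
  exact ⟨ha, hsub x hx⟩

lemma isZNormalOn_derivedUltrafilter {lam : ZFSet} (hI : ∀ x ∈ I, x ⊆ lam)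
    (ha : a ∈ (j I).1) (ha_lam : ∀ ξ ∈ a, ∃ η ∈ lam, (j η).1 = ξ) :
    IsZNormalOn lam I (derivedUltrafilter j I a) := by
  intro A hA
  let _ : ZFSet.Definable₁ A := Classical.allZFSetDefinable _
  have hgraph (ξ y : ZFSet) : ZFSet.pair ξ y ∈ ZFSet.map A lam ↔ ξ ∈ lam ∧ A ξ = y := by
    simp
  have hdiag : ZFSet.sep (fun x => ∀ ξ ∈ x, x ∈ A ξ) I =
      ZFSet.sep (fun x => ∀ ξ ∈ x, ∀ y, ZFSet.pair ξ y ∈ ZFSet.map A lam → x ∈ y) I := by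
    ext x
    simp only [ZFSet.mem_sep, hgraph]
    exact and_congr_right fun hx => forall₂_congr fun ξ hξ =>
      ⟨fun h y ⟨_, hy⟩ => hy ▸ h, fun h => h _ ⟨hI x hx hξ, rfl⟩⟩
  refine ⟨ZFSet.sep_subset, ?_⟩
  rw [hdiag, hj.map_diag_sep hM, ZFSet.mem_sep]
  refine ⟨ha, fun ξ hξ y hy => ?_⟩
  obtain ⟨η, hη, rfl⟩ := ha_lam ξ hξ
  have hηA := hj.pair_mem_map hM ((hgraph η (A η)).2 ⟨hη, rfl⟩)
  have hy_eq : y = (j (A η)).1 := hj.map_functional hM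
    (fun a b hab c d hcd hac => ((hgraph a b).1 hab).2.symm.trans
      (hac ▸ ((hgraph c d).1 hcd).2)) _ _ hy _ _ hηA rfl
  exact hy_eq ▸ (hA η hη).2

end Transfer

theorem claim_2_2_1_general (κ lam : ZFSet) (hκcard : IsCard κ)
    (M : ZFSet → Prop) (hMtrans : ∀ x y : ZFSet, M x → y ∈ x → M y)
    (j : ZFSet → {x : ZFSet // M x})
    (helem : ∀ (n : ℕ) (φ : Lε.Formula (Fin n)) (v : Fin n → ZFSet),
      RealizeIn ZFSet (· ∈ ·) φ v ↔
        RealizeIn {x : ZFSet // M x} (fun a b => a.1 ∈ b.1) φ (fun i => j (v i)))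
    (hcrit : ∀ ξ ∈ κ, (j ξ).1 = ξ)
    (jlam : ZFSet) (hjlam : ∀ y : ZFSet, y ∈ jlam ↔ ∃ ξ ∈ lam, (j ξ).1 = y)
    (hjlammem : jlam ∈ (j (Pk κ lam)).1) :
    IsZUltrafilterOn (Pk κ lam) {A : ZFSet | A ⊆ Pk κ lam ∧ jlam ∈ (j A).1} ∧
      IsZFineOn (Pk κ lam) {A : ZFSet | A ⊆ Pk κ lam ∧ jlam ∈ (j A).1} ∧
      IsZNormalOn lam (Pk κ lam) {A : ZFSet | A ⊆ Pk κ lam ∧ jlam ∈ (j A).1} := by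
  have hPk : ∀ x ∈ Pk κ lam, x ⊆ lam := fun x hx => ZFSet.mem_powerset.1 (ZFSet.mem_sep.1 hx).1
  have hsub : ∀ x ∈ Pk κ lam, (j x).1 ⊆ jlam := fun x hx ζ hζ => by
    obtain ⟨η, hη, rfl⟩ :=
      IsElementaryEmbedding.exists_eq_map_of_mem_Pk hMtrans helem hκcard.1.1 hcrit hx hζ
    exact (hjlam _).2 ⟨η, hPk x hx hη, rfl⟩
  exact ⟨isZUltrafilterOn_derivedUltrafilter hMtrans helem hjlammem,
    isZFineOn_derivedUltrafilter hMtrans helem hjlammem hsub,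
    isZNormalOn_derivedUltrafilter hMtrans helem hPk hjlammem fun ξ hξ => (hjlam ξ).1 hξ⟩

/-- Claim 2.2.1 (single-universe form): the ultrafilter
`U_j := {A ⊆ 𝒫_κ(λ) : j''λ ∈ j(A)}` derived from a `λ`-supercompactness embedding `j`
is a fine normal ultrafilter on `I := 𝒫_κ(λ)`. -/
theorem claim_2_2_1 (κ lam : ZFSet) (hκcard : IsCard κ) (hlam : IsOrd lam) (hkl : κ ⊆ lam)
    (M : ZFSet → Prop) (hMtrans : ∀ x y : ZFSet, M x → y ∈ x → M y)
    (j : ZFSet → {x : ZFSet // M x})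
    (helem : ∀ (n : ℕ) (φ : Lε.Formula (Fin n)) (v : Fin n → ZFSet),
      RealizeIn ZFSet (· ∈ ·) φ v ↔
        RealizeIn {x : ZFSet // M x} (fun a b => a.1 ∈ b.1) φ (fun i => j (v i)))
    (hcrit : ∀ ξ ∈ κ, (j ξ).1 = ξ)
    (hjump : lam ∈ (j κ).1)
    (jlam : ZFSet) (hjlam : ∀ y : ZFSet, y ∈ jlam ↔ ∃ ξ ∈ lam, (j ξ).1 = y)
    (hMjlam : M jlam) (hjlammem : jlam ∈ (j (Pk κ lam)).1) :
    IsZUltrafilterOn (Pk κ lam) {A : ZFSet | A ⊆ Pk κ lam ∧ jlam ∈ (j A).1} ∧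
      IsZFineOn (Pk κ lam) {A : ZFSet | A ⊆ Pk κ lam ∧ jlam ∈ (j A).1} ∧
      IsZNormalOn lam (Pk κ lam) {A : ZFSet | A ⊆ Pk κ lam ∧ jlam ∈ (j A).1} :=
  claim_2_2_1_general κ lam hκcard M hMtrans j helem hcrit jlam hjlam hjlammem
end

section
/- (Łoś's theorem for the ultrapower of the set-theoretic universe.) ∼_U is an equivalence relation on 𝒲, ∈_U is invariant under ∼_U in both arguments, and for every L_ε-formula φ(x₀,…,x_{n-1}) and all f₀,…,f_{n-1} ∈ 𝒲, the quotient structure (𝒲/∼_U, ∈_U) satisfies φ([f₀],…,[f_{n-1}]) if and only if {x ∈ I : φ(f₀(x),…,f_{n-1}(x)) holds in (ZFSet, ∈)} ∈ U. (Single-universe form of Claim 2.2.2.) -/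
open FirstOrder

/-- `f` is a ZFSet-function: a single-valued set of (Kuratowski) ordered pairs. -/
def IsZFFunc (f : ZFSet) : Prop :=
  (∀ p ∈ f, ∃ x y : ZFSet, p = ZFSet.pair x y) ∧
    ∀ x y y' : ZFSet, ZFSet.pair x y ∈ f → ZFSet.pair x y' ∈ f → y = y'

/-- The domain of a ZFSet-function. -/
def dom (f : ZFSet) : ZFSet :=
  ZFSet.sep (fun x => ∃ y : ZFSet, ZFSet.pair x y ∈ f) (ZFSet.sUnion (ZFSet.sUnion f))

/-- `f` is a ZFSet-function with domain `I`. -/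
def IsFuncOn (I f : ZFSet) : Prop := IsZFFunc f ∧ dom f = I

open Classical in
/-- The value `f(x)` of a ZFSet-function at `x`. -/
noncomputable def app (f x : ZFSet) : ZFSet :=
  if h : ∃ y : ZFSet, ZFSet.pair x y ∈ f then h.choose else ∅

/-- The collection `𝒲` of ZFSet-functions with domain `I`. -/
abbrev W (I : ZFSet) := {f : ZFSet // IsFuncOn I f}

/-- `f ∼_U g` iff `{x ∈ I : f(x) = g(x)} ∈ U`. -/
def simW (I : ZFSet) (U : Set ZFSet) (f g : W I) : Prop :=
  ZFSet.sep (fun x => app f.1 x = app g.1 x) I ∈ U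

/-- `f ∈_U g` iff `{x ∈ I : f(x) ∈ g(x)} ∈ U`. -/
def memW (I : ZFSet) (U : Set ZFSet) (f g : W I) : Prop :=
  ZFSet.sep (fun x => app f.1 x ∈ app g.1 x) I ∈ U

/-- The ultrapower `𝒲/∼_U`. -/
def QW (I : ZFSet) (U : Set ZFSet) := Quot (simW I U)

/-- The relation `∈_U` induced on the quotient `𝒲/∼_U`: two classes are related iff they
have `∈_U`-related representatives (for a congruence this is the usual induced relation). -/
def memQW (I : ZFSet) (U : Set ZFSet) (a b : QW I U) : Prop :=
  ∃ f g : W I, a = Quot.mk (simW I U) f ∧ b = Quot.mk (simW I U) g ∧ memW I U f g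

/-!
The sets `{a : I | a.1 ∈ A}` with `A ∈ U` form a genuine ultrafilter on the elements of `I`, and
`∼_U`, `∈_U` say that values agree, resp. are members, almost everywhere along it. Every map on
`I` is the value map of its graph, so `𝒲/∼_U` is isomorphic as an `L_ε`-structure to the
ultrapower of `ZFSet` along that ultrafilter, and Łoś's theorem for the ultrapower transfers.
-/

open Filter FirstOrder.Language

namespace ZFSet

def sepSubtype (I : ZFSet) (s : Set {x // x ∈ I}) : ZFSet :=
  I.sep fun x => ∃ h : x ∈ I, ⟨x, h⟩ ∈ s

variable {I : ZFSet}

@[simp]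
theorem mem_sepSubtype {s : Set {x // x ∈ I}} {x : ZFSet} :
    x ∈ I.sepSubtype s ↔ ∃ h : x ∈ I, ⟨x, h⟩ ∈ s := by
  rw [sepSubtype, mem_sep]
  exact ⟨And.right, fun h => ⟨h.1, h⟩⟩

theorem sepSubtype_setOf (P : ZFSet → Prop) : I.sepSubtype {a | P a.1} = I.sep P := by
  ext x; simp

theorem sepSubtype_univ : I.sepSubtype Set.univ = I := by
  ext x; simp

theorem sepSubtype_inter (s t : Set {x // x ∈ I}) :
    I.sepSubtype (s ∩ t) = I.sepSubtype s ∩ I.sepSubtype t := by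
  ext x
  simp only [mem_sepSubtype, Set.mem_inter_iff, mem_inter]
  exact ⟨fun ⟨hx, hs, ht⟩ => ⟨⟨hx, hs⟩, hx, ht⟩, fun ⟨⟨hx, hs⟩, _, ht⟩ => ⟨hx, hs, ht⟩⟩

theorem sepSubtype_compl (s : Set {x // x ∈ I}) : I.sepSubtype sᶜ = I \ I.sepSubtype s := by
  ext x
  simp only [mem_sepSubtype, Set.mem_compl_iff, mem_sdiff, not_exists]
  exact ⟨fun ⟨hx, hs⟩ => ⟨hx, fun _ => hs⟩, fun ⟨hx, hs⟩ => ⟨hx, hs hx⟩⟩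

theorem sepSubtype_mono {s t : Set {x // x ∈ I}} (h : s ⊆ t) :
    I.sepSubtype s ⊆ I.sepSubtype t :=
  fun _ hx => mem_sepSubtype.2 ((mem_sepSubtype.1 hx).imp fun _ hs => h hs)

theorem sepSubtype_subset (s : Set {x // x ∈ I}) : I.sepSubtype s ⊆ I :=
  fun _ hx => (mem_sep.1 hx).1

end ZFSet

namespace IsZUltrafilterOn

variable {I : ZFSet} {U : Set ZFSet} (hUF : IsZUltrafilterOn I U)
include hUF

theorem sdiff_mem_iff {A : ZFSet} (hA : A ⊆ I) : I \ A ∈ U ↔ A ∉ U := by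
  refine ⟨fun hc hA' => hUF.1 ?_, (hUF.2.2.2.2 A hA).resolve_left⟩
  convert hUF.2.2.1 A hA' _ hc
  ext x
  simp only [ZFSet.notMem_empty, false_iff, ZFSet.mem_inter, ZFSet.mem_sdiff]
  tauto

theorem self_mem : I ∈ U := by
  have h := (hUF.sdiff_mem_iff (ZFSet.empty_subset I)).2 hUF.1
  rwa [show I \ ∅ = I by ext; simp] at h

def toUltrafilter : Ultrafilter {x // x ∈ I} :=
  Ultrafilter.ofComplNotMemIff
    { sets := {s | I.sepSubtype s ∈ U}
      univ_sets := by simpa [Set.mem_ofPred_eq, ZFSet.sepSubtype_univ] using hUF.self_mem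
      sets_of_superset := fun hs hst =>
        hUF.2.2.2.1 _ hs _ (ZFSet.sepSubtype_mono hst) (ZFSet.sepSubtype_subset _)
      inter_sets := fun hs ht => by
        simpa [Set.mem_ofPred_eq, ZFSet.sepSubtype_inter] using hUF.2.2.1 _ hs _ ht }
    fun s => by
      simpa [ZFSet.sepSubtype_compl] using not_congr (hUF.sdiff_mem_iff (ZFSet.sepSubtype_subset s))

theorem eventually_toUltrafilter_iff (P : ZFSet → Prop) :
    (∀ᶠ a in (hUF.toUltrafilter : Filter {x // x ∈ I}), P a.1) ↔ I.sep P ∈ U := by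
  change I.sepSubtype _ ∈ U ↔ _
  rw [ZFSet.sepSubtype_setOf]

end IsZUltrafilterOn

theorem app_eq_of_pair_mem {f x y : ZFSet} (hf : IsZFFunc f) (h : ZFSet.pair x y ∈ f) :
    app f x = y := by
  have hex : ∃ y, ZFSet.pair x y ∈ f := ⟨y, h⟩
  rw [app, dif_pos hex]
  exact hf.2 x _ y hex.choose_spec h

theorem mem_dom_of_pair_mem {f x y : ZFSet} (h : ZFSet.pair x y ∈ f) : x ∈ dom f := by
  refine ZFSet.mem_sep.2 ⟨?_, y, h⟩
  refine ZFSet.mem_sUnion_of_mem (ZFSet.mem_singleton.2 rfl) (ZFSet.mem_sUnion_of_mem ?_ h)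
  simp [ZFSet.pair]

noncomputable def graphOn (I : ZFSet) (g : ZFSet → ZFSet) : ZFSet :=
  @ZFSet.map g (Classical.allZFSetDefinable _) I

theorem mem_graphOn {I : ZFSet} {g : ZFSet → ZFSet} {p : ZFSet} :
    p ∈ graphOn I g ↔ ∃ x ∈ I, ZFSet.pair x (g x) = p :=
  @ZFSet.mem_map g (Classical.allZFSetDefinable _) I p

theorem isFuncOn_graphOn (I : ZFSet) (g : ZFSet → ZFSet) : IsFuncOn I (graphOn I g) := by
  refine ⟨⟨fun p hp => ?_, fun x y y' hy hy' => ?_⟩, ?_⟩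
  · obtain ⟨x, -, rfl⟩ := mem_graphOn.1 hp
    exact ⟨x, g x, rfl⟩
  · obtain ⟨_, -, h⟩ := mem_graphOn.1 hy
    obtain ⟨_, -, h'⟩ := mem_graphOn.1 hy'
    obtain ⟨rfl, rfl⟩ := ZFSet.pair_injective h
    obtain ⟨rfl, rfl⟩ := ZFSet.pair_injective h'
    rfl
  · ext x
    refine ⟨fun hx => ?_, fun hx => mem_dom_of_pair_mem (mem_graphOn.2 ⟨x, hx, rfl⟩)⟩
    obtain ⟨-, y, hy⟩ := ZFSet.mem_sep.1 hx
    obtain ⟨_, hxI, h⟩ := mem_graphOn.1 hy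
    obtain ⟨rfl, -⟩ := ZFSet.pair_injective h
    exact hxI

theorem app_graphOn {I : ZFSet} (g : ZFSet → ZFSet) {x : ZFSet} (hx : x ∈ I) :
    app (graphOn I g) x = g x :=
  app_eq_of_pair_mem (isFuncOn_graphOn I g).1 (mem_graphOn.2 ⟨x, hx, rfl⟩)

namespace W

variable {I : ZFSet}

noncomputable def toFun (f : W I) : {x // x ∈ I} → ZFSet := fun a => app f.1 a.1

theorem toFun_surjective : Function.Surjective (toFun (I := I)) := by
  classical
  intro F
  refine ⟨⟨graphOn I fun x => if h : x ∈ I then F ⟨x, h⟩ else ∅, isFuncOn_graphOn _ _⟩, ?_⟩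
  funext a
  simp only [toFun, app_graphOn _ a.2, dif_pos a.2]

end W

instance : Lε.Structure ZFSet := memStruc ZFSet (· ∈ ·)

instance (I : ZFSet) (U : Set ZFSet) : Lε.Structure (QW I U) := memStruc _ (memQW I U)

namespace IsZUltrafilterOn

variable {I : ZFSet} {U : Set ZFSet} (hUF : IsZUltrafilterOn I U)
include hUF

theorem simW_iff_eventuallyEq (f g : W I) :
    simW I U f g ↔ f.toFun =ᶠ[hUF.toUltrafilter] g.toFun :=
  (hUF.eventually_toUltrafilter_iff fun x => app f.1 x = app g.1 x).symm

theorem memW_iff_eventually (f g : W I) :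
    memW I U f g ↔ ∀ᶠ a in (hUF.toUltrafilter : Filter _), f.toFun a ∈ g.toFun a :=
  (hUF.eventually_toUltrafilter_iff fun x => app f.1 x ∈ app g.1 x).symm

theorem equivalence_simW : Equivalence (simW I U) := by
  refine ⟨fun _ => ?_, fun h => ?_, fun h₁ h₂ => ?_⟩ <;>
    simp only [hUF.simW_iff_eventuallyEq] at *
  exacts [EventuallyEq.rfl, h.symm, h₁.trans h₂]

theorem memW_congr {f f' g g' : W I} (hf : simW I U f f') (hg : simW I U g g') :
    memW I U f g ↔ memW I U f' g' := by
  rw [hUF.simW_iff_eventuallyEq] at hf hg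
  rw [hUF.memW_iff_eventually, hUF.memW_iff_eventually]
  exact eventually_congr (hf.mp (hg.mono fun a hga hfa => by rw [hfa, hga]))

theorem quot_mk_eq_iff {f g : W I} : Quot.mk (simW I U) f = Quot.mk _ g ↔ simW I U f g :=
  ⟨fun h => hUF.equivalence_simW.eqvGen_iff.1 (Quot.eqvGen_exact h), Quot.sound⟩

theorem memQW_mk_iff (f g : W I) :
    memQW I U (Quot.mk _ f) (Quot.mk _ g) ↔ memW I U f g := by
  refine ⟨fun ⟨f', g', hf, hg, h⟩ => ?_, fun h => ⟨f, g, rfl, rfl, h⟩⟩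
  exact (hUF.memW_congr (hUF.quot_mk_eq_iff.1 hf) (hUF.quot_mk_eq_iff.1 hg)).2 h

noncomputable def equivUltraproduct :
    QW I U ≃ (hUF.toUltrafilter : Filter {x // x ∈ I}).Product fun _ => ZFSet := by
  refine Equiv.ofBijective (Quot.map W.toFun fun f g => (hUF.simW_iff_eventuallyEq f g).1) ⟨?_, ?_⟩
  · rintro ⟨f⟩ ⟨g⟩ h
    exact hUF.quot_mk_eq_iff.2 ((hUF.simW_iff_eventuallyEq f g).2 (Quotient.exact h))
  · rintro ⟨F⟩
    obtain ⟨f, rfl⟩ := W.toFun_surjective F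
    exact ⟨Quot.mk _ f, rfl⟩

noncomputable def lequivUltraproduct :
    Lε.Equiv (QW I U) ((hUF.toUltrafilter : Filter {x // x ∈ I}).Product fun _ => ZFSet) where
  toEquiv := hUF.equivUltraproduct
  map_fun' {_} F := isEmptyElim F
  map_rel' {n} r x := by
    cases r
    choose fs hfs using fun i => Quot.exists_rep (x i)
    obtain rfl : (fun i => Quot.mk _ (fs i)) = x := funext hfs
    exact (relMap_quotient_mk' _ _ (fun i => (fs i).toFun)).trans
      ((hUF.memW_iff_eventually _ _).symm.trans (hUF.memQW_mk_iff _ _).symm)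

end IsZUltrafilterOn

/-- Claim 2.2.2 (single-universe form, Łoś's theorem for the ultrapower of the universe):
`∼_U` is an equivalence relation on `𝒲`, `∈_U` is invariant under `∼_U` in both arguments,
and the quotient structure `⟨𝒲/∼_U, ∈_U⟩` satisfies `φ([f₀],…,[f_{n-1}])` iff
`{x ∈ I : φ(f₀(x),…,f_{n-1}(x))} ∈ U`. -/
theorem claim_2_2_2 (I : ZFSet) (U : Set ZFSet) (hUF : IsZUltrafilterOn I U) :
    Equivalence (simW I U) ∧
      (∀ f f' g g' : W I, simW I U f f' → simW I U g g' →
        (memW I U f g ↔ memW I U f' g')) ∧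
      (∀ (n : ℕ) (φ : Lε.Formula (Fin n)) (fs : Fin n → W I),
        RealizeIn (QW I U) (memQW I U) φ (fun i => Quot.mk (simW I U) (fs i)) ↔
          ZFSet.sep (fun x => RealizeIn ZFSet (· ∈ ·) φ (fun i => app (fs i).1 x)) I ∈ U) := by
  refine ⟨hUF.equivalence_simW, fun _ _ _ _ => hUF.memW_congr, fun n φ fs => ?_⟩
  exact (StrongHomClass.realize_formula hUF.lequivUltraproduct φ).symm.trans <|
    (Ultraproduct.realize_formula_cast φ fun i => (fs i).toFun).trans <|
      hUF.eventually_toUltrafilter_iff fun x => RealizeIn ZFSet (· ∈ ·) φ fun i => app (fs i).1 x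
end

section
/- Let U be a fine normal ultrafilter on I := 𝒫_κ(λ). Then for every ordinal ξ ∈ κ and every function F assigning to each x ∈ I a ZFSet, one has {x ∈ I : F(x) ∈ ξ} ∈ U if and only if there is an ordinal η ∈ ξ with {x ∈ I : F(x) = η} ∈ U. (The combinatorial content of Claim 2.2.5 (1): the ultrapower embedding is the identity below κ.) -/
open ZFSet

namespace IsZUltrafilterOn

variable {I : ZFSet} {U : Set ZFSet} {p q : ZFSet → Prop}

theorem sep_mem_mono (hU : IsZUltrafilterOn I U) (hp : ZFSet.sep p I ∈ U)
    (hpq : ∀ x ∈ I, p x → q x) : ZFSet.sep q I ∈ U :=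
  hU.2.2.2.1 _ hp _ (fun x hx => by
    rw [mem_sep] at hx ⊢
    exact ⟨hx.1, hpq x hx.1 hx.2⟩) sep_subset

theorem sep_and_mem (hU : IsZUltrafilterOn I U) (hp : ZFSet.sep p I ∈ U)
    (hq : ZFSet.sep q I ∈ U) : ZFSet.sep (fun x => p x ∧ q x) I ∈ U := by
  convert hU.2.2.1 _ hp _ hq using 1
  ext x
  simp only [mem_inter, mem_sep]
  tauto

theorem exists_of_sep_mem (hU : IsZUltrafilterOn I U) (hp : ZFSet.sep p I ∈ U) :
    ∃ x ∈ I, p x := by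
  obtain h | ⟨x, hx⟩ := eq_empty_or_nonempty (ZFSet.sep p I)
  · exact absurd (h ▸ hp) hU.1
  · exact ⟨x, mem_sep.1 hx⟩

theorem sdiff_mem_of_notMem (hU : IsZUltrafilterOn I U) {A : ZFSet} (hA : A ⊆ I)
    (h : A ∉ U) : I \ A ∈ U :=
  (hU.2.2.2.2 A hA).resolve_left h

end IsZUltrafilterOn

theorem IsZNormalOn.exists_sep_eq_mem_of_regressive {lam I : ZFSet} {U : Set ZFSet}
    (hU : IsZUltrafilterOn I U) (hN : IsZNormalOn lam I U) {F : ZFSet → ZFSet}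
    (hF : ZFSet.sep (fun x => F x ∈ x ∩ lam) I ∈ U) :
    ∃ η ∈ lam, ZFSet.sep (fun x => F x = η) I ∈ U := by
  by_contra! h
  have hcompl : ∀ η ∈ lam, I \ ZFSet.sep (fun x => F x = η) I ∈ U := fun η hη =>
    hU.sdiff_mem_of_notMem sep_subset (h η hη)
  obtain ⟨x, -, hxD, hxF⟩ := hU.exists_of_sep_mem (hU.sep_and_mem (hN _ hcompl) hF)
  have hx := hxD (F x) (mem_inter.1 hxF).1
  rw [mem_sdiff, mem_sep] at hx
  exact hx.2 ⟨hx.1, rfl⟩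

theorem isInjFn_map_id (x : ZFSet) : IsInjFn x x (map (fun y => y) x) := by
  refine ⟨map_isFunc.2 fun z hz => hz, fun a _ b _ c hac hbc => ?_⟩
  obtain ⟨a', -, ha⟩ := mem_map.1 hac
  obtain ⟨b', -, hb⟩ := mem_map.1 hbc
  rw [pair_inj] at ha hb
  rw [← ha.1, ← hb.1, ha.2, hb.2]

theorem subset_of_mem_Pk {κ lam x : ZFSet} (hx : x ∈ Pk κ lam) : x ⊆ lam :=
  mem_powerset.1 (mem_sep.1 hx).1

theorem mem_Pk_of_mem {κ lam ξ : ZFSet} (hκ : κ.IsTransitive) (hκlam : κ ⊆ lam) (hξ : ξ ∈ κ) :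
    ξ ∈ Pk κ lam :=
  mem_sep.2 ⟨mem_powerset.2 fun _ hz => hκlam (hκ.subset_of_mem hξ hz),
    ξ, hξ, _, isInjFn_map_id ξ⟩

theorem claim_2_2_5_1_general (κ lam : ZFSet) (hκcard : IsCard κ) (hkl : κ ⊆ lam)
    (U : Set ZFSet)
    (hUF : IsZUltrafilterOn (Pk κ lam) U)
    (hfine : IsZFineOn (Pk κ lam) U)
    (hnormal : IsZNormalOn lam (Pk κ lam) U)
    (ξ : ZFSet) (hξ : ξ ∈ κ) (F : ZFSet → ZFSet) :
    ZFSet.sep (fun x => F x ∈ ξ) (Pk κ lam) ∈ U ↔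
      ∃ η ∈ ξ, ZFSet.sep (fun x => F x = η) (Pk κ lam) ∈ U := by
  constructor
  · intro hFξ
    have hξ_sub : ZFSet.sep (fun x => ξ ⊆ x) (Pk κ lam) ∈ U :=
      hfine ξ (mem_Pk_of_mem hκcard.1.1 hkl hξ)
    have hreg : ZFSet.sep (fun x => F x ∈ x ∩ lam) (Pk κ lam) ∈ U :=
      hUF.sep_mem_mono (hUF.sep_and_mem hFξ hξ_sub) fun x hx ⟨hFx, hξx⟩ =>
        mem_inter.2 ⟨hξx hFx, subset_of_mem_Pk hx (hξx hFx)⟩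
    obtain ⟨η, -, hη⟩ := hnormal.exists_sep_eq_mem_of_regressive hUF hreg
    obtain ⟨x, -, hFx, rfl⟩ := hUF.exists_of_sep_mem (hUF.sep_and_mem hFξ hη)
    exact ⟨F x, hFx, hη⟩
  · rintro ⟨η, hη, hFη⟩
    exact hUF.sep_mem_mono hFη fun x _ hx => hx ▸ hη

/-- The combinatorial content of Claim 2.2.5 (1): if `U` is a fine normal ultrafilter on
`I := 𝒫_κ(λ)`, `ξ ∈ κ`, and `F` assigns a ZFSet to each `x ∈ I`, then
`{x ∈ I : F(x) ∈ ξ} ∈ U` iff there is `η ∈ ξ` with `{x ∈ I : F(x) = η} ∈ U`. -/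
theorem claim_2_2_5_1 (κ lam : ZFSet) (hκcard : IsCard κ) (hlam : IsOrd lam) (hkl : κ ⊆ lam)
    (U : Set ZFSet)
    (hUF : IsZUltrafilterOn (Pk κ lam) U)
    (hfine : IsZFineOn (Pk κ lam) U)
    (hnormal : IsZNormalOn lam (Pk κ lam) U)
    (ξ : ZFSet) (hξ : ξ ∈ κ) (F : ZFSet → ZFSet) :
    ZFSet.sep (fun x => F x ∈ ξ) (Pk κ lam) ∈ U ↔
      ∃ η ∈ ξ, ZFSet.sep (fun x => F x = η) (Pk κ lam) ∈ U :=
  claim_2_2_5_1_general κ lam hκcard hkl U hUF hfine hnormal ξ hξ F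
end

section
/- Suppose that for every a ∈ A the transitive closure of a belongs to A. Then N₀ := {b ∈ N : ∃ a ∈ A, b ∈ j₀(a)} (= ⋃ j₀''A) is a transitive set. (Lemma 3.2 (1).) -/
open FirstOrder

/-- `t` is the transitive closure of `a`: the `⊆`-least transitive set including `a`. -/
def IsTrCl (a t : ZFSet) : Prop :=
  a ⊆ t ∧ t.IsTransitive ∧ ∀ s : ZFSet, a ⊆ s → s.IsTransitive → t ⊆ s

open FirstOrder.Language in
/-- `∀ x, x ∈ v0 → x ∈ v1`. -/
def subFml : Lε.Formula (Fin 2) :=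
  ∀' (adj.boundedFormula₂ (&0) (Term.var (Sum.inl 0)) ⟹
      adj.boundedFormula₂ (&0) (Term.var (Sum.inl 1)))

open FirstOrder.Language in
/-- `∀ x y, x ∈ y → y ∈ v0 → x ∈ v0`. -/
def trFml : Lε.Formula (Fin 1) :=
  ∀' ∀' (adj.boundedFormula₂ (&0) (&1) ⟹
      (adj.boundedFormula₂ (&1) (Term.var (Sum.inl 0)) ⟹
       adj.boundedFormula₂ (&0) (Term.var (Sum.inl 0))))

lemma realize_subFml (S : Type*) (r : S → S → Prop) (v : Fin 2 → S) :
    RealizeIn S r subFml v ↔ ∀ x : S, r x (v 0) → r x (v 1) := by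
  letI := memStruc S r
  simp only [RealizeIn, subFml, Language.Formula.Realize, Language.BoundedFormula.realize_all,
    Language.BoundedFormula.realize_imp, Language.BoundedFormula.realize_rel₂]
  rfl

lemma realize_trFml (S : Type*) (r : S → S → Prop) (v : Fin 1 → S) :
    RealizeIn S r trFml v ↔ ∀ x y : S, r x y → r y (v 0) → r x (v 0) := by
  letI := memStruc S r
  simp only [RealizeIn, trFml, Language.Formula.Realize, Language.BoundedFormula.realize_all,
    Language.BoundedFormula.realize_imp, Language.BoundedFormula.realize_rel₂]
  rfl

/-- Lemma 3.2 (1): if `A` contains the transitive closure of each of its elements, then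
`N₀ := {b ∈ N : ∃ a ∈ A, b ∈ j₀(a)}` is transitive. -/
theorem lemma_3_2_1
    (A N : ZFSet) (hA : A.IsTransitive) (hN : N.IsTransitive)
    (j₀ : ZFSet → ZFSet) (hj : ∀ a ∈ A, j₀ a ∈ N)
    (helem : ∀ (n : ℕ) (φ : Lε.Formula (Fin n)) (v : Fin n → {x : ZFSet // x ∈ A}),
      RealizeIn {x : ZFSet // x ∈ A} (fun a b => a.1 ∈ b.1) φ v ↔
        RealizeIn {x : ZFSet // x ∈ N} (fun a b => a.1 ∈ b.1) φ
          (fun i => ⟨j₀ (v i).1, hj (v i).1 (v i).2⟩))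
    (htc : ∀ a ∈ A, ∃ t ∈ A, IsTrCl a t) :
    ∀ b : ZFSet, (b ∈ N ∧ ∃ a ∈ A, b ∈ j₀ a) →
      ∀ c ∈ b, (c ∈ N ∧ ∃ a ∈ A, c ∈ j₀ a) := by
  rintro b ⟨hbN, a, haA, hba⟩ c hcb
  have hcN : c ∈ N := hN.mem_trans hcb hbN
  refine ⟨hcN, ?_⟩
  obtain ⟨t, htA, hat, htr, -⟩ := htc a haA
  refine ⟨t, htA, ?_⟩
  have h1 : RealizeIn {x : ZFSet // x ∈ A} (fun a b => a.1 ∈ b.1) subFml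
      ![⟨a, haA⟩, ⟨t, htA⟩] := by
    rw [realize_subFml]
    rintro ⟨x, hx⟩ hxa
    exact hat hxa
  have hsub' := (helem 2 subFml ![⟨a, haA⟩, ⟨t, htA⟩]).mp h1
  rw [realize_subFml] at hsub'
  have h2 : RealizeIn {x : ZFSet // x ∈ A} (fun a b => a.1 ∈ b.1) trFml ![⟨t, htA⟩] := by
    rw [realize_trFml]
    rintro ⟨x, hx⟩ ⟨y, hy⟩ hxy hyt
    exact htr.mem_trans hxy hyt
  have htr' := (helem 1 trFml ![⟨t, htA⟩]).mp h2
  rw [realize_trFml] at htr'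
  have hbjt : b ∈ j₀ t := hsub' ⟨b, hbN⟩ hba
  exact htr' ⟨c, hcN⟩ ⟨b, hbN⟩ hcb hbjt
end

section
/- Suppose that for every a ∈ A the transitive closure of a belongs to A. Then for every a ∈ A such that a is a transitive set, j₀(a) is a transitive set and j₀(a) ⊆ N₀. (Lemma 3.2 (4), in the general form used in its proof.) -/
open FirstOrder

open FirstOrder.Language

def transitiveFormula : Lε.Formula (Fin 1) :=
  ∀' ∀' ((adj.boundedFormula₂ (&0) (Term.var (Sum.inl 0)) ⊓ adj.boundedFormula₂ (&1) (&0)) ⟹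
    adj.boundedFormula₂ (&1) (Term.var (Sum.inl 0)))

theorem realizeIn_transitiveFormula (S : Type*) (r : S → S → Prop) (a : S) :
    RealizeIn S r transitiveFormula (fun _ => a) ↔ ∀ x y : S, r x a → r y x → r y a := by
  simp only [RealizeIn, transitiveFormula, Formula.Realize, BoundedFormula.realize_all,
    BoundedFormula.realize_imp, BoundedFormula.realize_inf, BoundedFormula.realize_rel₂,
    Term.realize, and_imp]
  exact Iff.rfl

theorem realizeIn_transitiveFormula_of_isTransitive {A a : ZFSet} (ha : a ∈ A)
    (hatr : a.IsTransitive) :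
    RealizeIn {x : ZFSet // x ∈ A} (fun a b => a.1 ∈ b.1) transitiveFormula
      (fun _ => ⟨a, ha⟩) :=
  (realizeIn_transitiveFormula _ _ _).mpr fun _ _ hx hy => hatr _ hx hy

theorem ZFSet.IsTransitive.of_realizeIn_transitiveFormula {N b : ZFSet} (hN : N.IsTransitive)
    (hb : b ∈ N)
    (h : RealizeIn {x : ZFSet // x ∈ N} (fun a b => a.1 ∈ b.1) transitiveFormula
      (fun _ => ⟨b, hb⟩)) :
    b.IsTransitive := by
  intro y hy z hz
  have hyN : y ∈ N := hN _ hb hy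
  exact (realizeIn_transitiveFormula _ _ _).mp h ⟨y, hyN⟩ ⟨z, hN _ hyN hz⟩ hy hz

theorem lemma_3_2_4_general
    (A N : ZFSet) (hN : N.IsTransitive)
    (j₀ : ZFSet → ZFSet) (hj : ∀ a ∈ A, j₀ a ∈ N)
    (helem : ∀ (n : ℕ) (φ : Lε.Formula (Fin n)) (v : Fin n → {x : ZFSet // x ∈ A}),
      RealizeIn {x : ZFSet // x ∈ A} (fun a b => a.1 ∈ b.1) φ v ↔
        RealizeIn {x : ZFSet // x ∈ N} (fun a b => a.1 ∈ b.1) φ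
          (fun i => ⟨j₀ (v i).1, hj (v i).1 (v i).2⟩)) :
    ∀ a ∈ A, a.IsTransitive →
      (j₀ a).IsTransitive ∧ ∀ c ∈ j₀ a, (c ∈ N ∧ ∃ a' ∈ A, c ∈ j₀ a') := by
  intro a ha hatr
  refine ⟨?_, fun c hc => ⟨hN _ (hj a ha) hc, a, ha, hc⟩⟩
  exact .of_realizeIn_transitiveFormula hN (hj a ha)
    ((helem 1 transitiveFormula fun _ => ⟨a, ha⟩).mp
      (realizeIn_transitiveFormula_of_isTransitive ha hatr))

/-- Lemma 3.2 (4) (general form): if `A` contains the transitive closure of each of its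
elements, then for every transitive `a ∈ A`, `j₀(a)` is transitive and
`j₀(a) ⊆ N₀ := {b ∈ N : ∃ a ∈ A, b ∈ j₀(a)}`. -/
theorem lemma_3_2_4
    (A N : ZFSet) (hA : A.IsTransitive) (hN : N.IsTransitive)
    (j₀ : ZFSet → ZFSet) (hj : ∀ a ∈ A, j₀ a ∈ N)
    (helem : ∀ (n : ℕ) (φ : Lε.Formula (Fin n)) (v : Fin n → {x : ZFSet // x ∈ A}),
      RealizeIn {x : ZFSet // x ∈ A} (fun a b => a.1 ∈ b.1) φ v ↔
        RealizeIn {x : ZFSet // x ∈ N} (fun a b => a.1 ∈ b.1) φ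
          (fun i => ⟨j₀ (v i).1, hj (v i).1 (v i).2⟩))
    (htc : ∀ a ∈ A, ∃ t ∈ A, IsTrCl a t) :
    ∀ a ∈ A, a.IsTransitive →
      (j₀ a).IsTransitive ∧ ∀ c ∈ j₀ a, (c ∈ N ∧ ∃ a' ∈ A, c ∈ j₀ a') :=
  lemma_3_2_4_general A N hN j₀ hj helem
end
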